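/- (SubRiemannian Bochner formula, strictly normal case) Let M be an sRC-manifold, strictly normal with respect to the basic grading, with VM integrable, and let f be a smooth function. Then (1/2)Δ₀|∇₍₀₎f|² - ⟨∇₍₀₎f, ∇₍₀₎Δ₀f⟩ = ℛ(∇f,∇f) + ‖∇₍₀₎^{2,sym} f‖² - 2Σ_i ⟨∇_{E_i}∇₍₁₎f, Tor(E_i, ∇₍₀₎f)⟩, and (1/2)Δ₀|∇₍₁₎f|² - ⟨∇₍₁₎f, ∇₍₁₎Δ₀f⟩ = ‖∇₍₀₎∇₍₁₎f‖². -/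

import Mathlib

/-- Abstract model of the calculus of smooth vector fields on a manifold:
`F` plays the role of the ring of smooth functions, `V` the space of vector
fields, `D` the derivation action of vector fields on functions, `bracket`
the Lie bracket and `g` a Riemannian metric. -/
structure VFCalc (F : Type*) (V : Type*) [CommRing F] [Algebra ℝ F]
    [AddCommGroup V] [Module F V] where
  D : V → F → F
  D_add : ∀ X f h, D X (f + h) = D X f + D X h
  D_mul : ∀ X f h, D X (f * h) = f * D X h + h * D X f
  D_addX : ∀ X Y f, D (X + Y) f = D X f + D Y f
  D_smulX : ∀ (f : F) (X : V) (h : F), D (f • X) h = f * D X h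
  bracket : V → V → V
  bracket_antisymm : ∀ X Y, bracket X Y = -bracket Y X
  bracket_addl : ∀ X Y Z, bracket (X + Y) Z = bracket X Z + bracket Y Z
  bracket_leibniz : ∀ (X : V) (f : F) (Y : V),
    bracket X (f • Y) = f • bracket X Y + (D X f) • Y
  jacobi : ∀ X Y Z,
    bracket X (bracket Y Z) + bracket Y (bracket Z X) + bracket Z (bracket X Y) = 0
  D_bracket : ∀ X Y f, D (bracket X Y) f = D X (D Y f) - D Y (D X f)
  g : V → V → F
  g_symm : ∀ X Y, g X Y = g Y X
  g_addl : ∀ X Y Z, g (X + Y) Z = g X Z + g Y Z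
  g_smull : ∀ (f : F) (X Y : V), g (f • X) Y = f * g X Y

namespace VFCalc

variable {F : Type*} {V : Type*} [CommRing F] [Algebra ℝ F]
  [AddCommGroup V] [Module F V]

/-- `nab` is an affine connection on vector fields. -/
structure IsConnection (S : VFCalc F V) (nab : V → V → V) : Prop where
  addX : ∀ X Y Z, nab (X + Y) Z = nab X Z + nab Y Z
  smulX : ∀ (f : F) (X Y : V), nab (f • X) Y = f • nab X Y
  addY : ∀ X Y Z, nab X (Y + Z) = nab X Y + nab X Z
  leibniz : ∀ (X : V) (f : F) (Y : V), nab X (f • Y) = f • nab X Y + (S.D X f) • Y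

/-- The torsion `Tor(X,Y) = ∇_X Y - ∇_Y X - [X,Y]` of a connection. -/
def tor (S : VFCalc F V) (nab : V → V → V) (X Y : V) : V :=
  nab X Y - nab Y X - S.bracket X Y

/-- The curvature operator `R(X,Y)Z = ∇_X ∇_Y Z - ∇_Y ∇_X Z - ∇_{[X,Y]} Z`. -/
def curv (S : VFCalc F V) (nab : V → V → V) (X Y Z : V) : V :=
  nab X (nab Y Z) - nab Y (nab X Z) - nab (S.bracket X Y) Z

/-- The (4,0) curvature tensor `Rm(A,B,C,D) = ⟨R(A,B)C, D⟩`. -/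
def Rm (S : VFCalc F V) (nab : V → V → V) (A B C D : V) : F :=
  S.g (curv S nab A B C) D

/-- Metric compatibility of a connection: `∇ g = 0`. -/
def MetricCompat (S : VFCalc F V) (nab : V → V → V) : Prop :=
  ∀ X Y Z, S.D X (S.g Y Z) = S.g (nab X Y) Z + S.g Y (nab X Z)

/-- The covariant derivative of the torsion: `(∇_X Tor)(Y,Z)`. -/
def nabTor (S : VFCalc F V) (nab : V → V → V) (X Y Z : V) : V :=
  nab X (tor S nab Y Z) - tor S nab (nab X Y) Z - tor S nab Y (nab X Z)

end VFCalc
/-- An sRC decomposition `TM = HM ⊕ VM`, recorded via the two orthogonal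
projections `H` (horizontal) and `Vp` (vertical). -/
structure TwoGrading {F : Type*} {V : Type*} [CommRing F] [Algebra ℝ F]
    [AddCommGroup V] [Module F V] (S : VFCalc F V) where
  H : V → V
  Vp : V → V
  H_add : ∀ X Y, H (X + Y) = H X + H Y
  H_smul : ∀ (f : F) (X : V), H (f • X) = f • H X
  Vp_add : ∀ X Y, Vp (X + Y) = Vp X + Vp Y
  Vp_smul : ∀ (f : F) (X : V), Vp (f • X) = f • Vp X
  sum_eq : ∀ X, H X + Vp X = X
  H_H : ∀ X, H (H X) = H X
  H_Vp : ∀ X, H (Vp X) = 0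
  orth : ∀ X Y, S.g (H X) (Vp Y) = 0

namespace VFCalc

variable {F : Type*} {V : Type*} [CommRing F] [Algebra ℝ F]
  [AddCommGroup V] [Module F V]

/-- `nab` is the canonical (basic) connection of the sRC-manifold: metric
compatible, `HM` and `VM` parallel, `Tor(HM,HM) ⊆ VM`, `Tor(VM,VM) ⊆ HM`,
and the torsion symmetries. -/
structure IsCanonical (S : VFCalc F V) (G : TwoGrading S) (nab : V → V → V) : Prop where
  conn : IsConnection S nab
  metric : MetricCompat S nab
  parH : ∀ X Y, nab X (G.H Y) = G.H (nab X Y)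
  torHH : ∀ X Y, G.H (tor S nab (G.H X) (G.H Y)) = 0
  torVV : ∀ X Y, G.Vp (tor S nab (G.Vp X) (G.Vp Y)) = 0
  torSymH : ∀ X Z T, S.g (tor S nab (G.H X) (G.Vp T)) (G.H Z)
      = S.g (tor S nab (G.H Z) (G.Vp T)) (G.H X)
  torSymV : ∀ X Z T, S.g (tor S nab (G.Vp X) (G.H T)) (G.Vp Z)
      = S.g (tor S nab (G.Vp Z) (G.H T)) (G.Vp X)

/-- Normality of the vertical complement: the tensor
`B(X,Y,T) = T⟨X,Y⟩ + ⟨[X,T],Y⟩ + ⟨[Y,T],X⟩` vanishes for horizontal `X,Y`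
and vertical `T`. -/
def NormalV (S : VFCalc F V) (G : TwoGrading S) : Prop :=
  ∀ X Y T, G.H X = X → G.H Y = Y → G.Vp T = T →
    S.D T (S.g X Y) + S.g (S.bracket X T) Y + S.g (S.bracket Y T) X = 0

/-- `1`-normality (for the basic grading): the tensor `B⁽¹⁾` vanishes,
i.e. `T⟨X,Y⟩ + ⟨[X,T],Y⟩ + ⟨[Y,T],X⟩ = 0` for vertical `X,Y` and horizontal `T`. -/
def NormalH (S : VFCalc F V) (G : TwoGrading S) : Prop :=
  ∀ X Y T, G.Vp X = X → G.Vp Y = Y → G.H T = T →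
    S.D T (S.g X Y) + S.g (S.bracket X T) Y + S.g (S.bracket Y T) X = 0

/-- Integrability of the vertical bundle: `[VM,VM] ⊆ VM`. -/
def IntegrableV (S : VFCalc F V) (G : TwoGrading S) : Prop :=
  ∀ X Y, G.H (S.bracket (G.Vp X) (G.Vp Y)) = 0

/-- A (global) horizontal orthonormal frame. -/
def IsHFrame (S : VFCalc F V) (G : TwoGrading S) {d : ℕ} (E : Fin d → V) : Prop :=
  (∀ i, G.H (E i) = E i) ∧ (∀ i j, S.g (E i) (E j) = if i = j then 1 else 0) ∧
    (∀ X, G.H X = X → X = ∑ i, S.g X (E i) • E i)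

/-- A (global) vertical orthonormal frame. -/
def IsVFrame (S : VFCalc F V) (G : TwoGrading S) {m : ℕ} (U : Fin m → V) : Prop :=
  (∀ a, G.Vp (U a) = U a) ∧ (∀ a b, S.g (U a) (U b) = if a = b then 1 else 0) ∧
    (∀ X, G.Vp X = X → X = ∑ a, S.g X (U a) • U a)

/-- The subRiemannian Ricci curvature `Rc(A,B) = Σ_k Rm(A,E_k,E_k,B)`. -/
def Ric (S : VFCalc F V) (nab : V → V → V) {d : ℕ} (E : Fin d → V) (A B : V) : F :=
  ∑ k, Rm S nab A (E k) (E k) B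

end VFCalc

namespace VFCalc

variable {F : Type*} {V : Type*} [CommRing F] [Algebra ℝ F]
  [AddCommGroup V] [Module F V]

/-- The horizontal gradient of a function, with respect to a horizontal
orthonormal frame `E`. -/
def grad0 (S : VFCalc F V) {d : ℕ} (E : Fin d → V) (f : F) : V :=
  ∑ i, S.D (E i) f • E i

/-- The vertical gradient of a function, with respect to a vertical
orthonormal frame `U`. -/
def grad1 (S : VFCalc F V) {m : ℕ} (U : Fin m → V) (f : F) : V :=
  ∑ a, S.D (U a) f • U a

/-- The horizontal Laplacian `Δ₀ f = Σ_i (∇_{E_i}∇_{E_i} - ∇_{∇_{E_i}E_i}) f`. -/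
def lap (S : VFCalc F V) (nab : V → V → V) {d : ℕ} (E : Fin d → V) (f : F) : F :=
  ∑ i, (S.D (E i) (S.D (E i) f) - S.D (nab (E i) (E i)) f)

end VFCalc

namespace VFCalc

variable {F : Type*} {V : Type*} [CommRing F] [Algebra ℝ F]
  [AddCommGroup V] [Module F V]

/-- The Baudoin-Garofalo tensor evaluated on the diagonal:
`ℛ(A,A) = Rc(A₀,A₀) + ⟨A, tr(∇Tor)(A₀)⟩ + (1/4)Σ_{i,j}|⟨Tor(E_i,E_j),A⟩|²`. -/
noncomputable def BG (S : VFCalc F V) (G : TwoGrading S) (nab : V → V → V)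
    {d : ℕ} (E : Fin d → V) (A : V) : F :=
  Ric S nab E (G.H A) (G.H A)
    + S.g A (∑ i, nabTor S nab (E i) (G.H A) (E i))
    + (1 / 4 : ℝ) • ∑ i, ∑ j,
        S.g (tor S nab (E i) (E j)) A * S.g (tor S nab (E i) (E j)) A

/-- The horizontal Hessian `∇²f(X,Y)`. -/
def hess (S : VFCalc F V) (nab : V → V → V) (f : F) (X Y : V) : F :=
  S.D X (S.D Y f) - S.D (nab X Y) f

/-- The symmetrized horizontal Hessian. -/
noncomputable def symhess (S : VFCalc F V) (nab : V → V → V) (f : F) (X Y : V) : F :=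
  (1 / 2 : ℝ) • (hess S nab f X Y + hess S nab f Y X)

end VFCalc


namespace VFCalc

variable {F : Type*} {V : Type*} [CommRing F] [Algebra ℝ F]
  [AddCommGroup V] [Module F V] (S : VFCalc F V)

/-! ### Basic lemmas about `D`, `g`, `bracket` -/

lemma d_zero (X : V) : S.D X 0 = 0 := by
  have := S.D_add X 0 0; simpa using this.symm

lemma d_neg (X : V) (a : F) : S.D X (-a) = -S.D X a := by
  have h := S.D_add X a (-a); rw [add_neg_cancel, S.d_zero] at h
  exact eq_neg_of_add_eq_zero_right h.symm

lemma d_sub (X : V) (a b : F) : S.D X (a - b) = S.D X a - S.D X b := by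
  rw [sub_eq_add_neg, S.D_add, S.d_neg]; ring

lemma d_one (X : V) : S.D X 1 = 0 := by
  have h := S.D_mul X 1 1; simpa using h

lemma dx_zero (f : F) : S.D (0 : V) f = 0 := by
  have := S.D_addX 0 0 f; simpa using this.symm

lemma dx_neg (X : V) (f : F) : S.D (-X) f = -S.D X f := by
  have h := S.D_addX X (-X) f; rw [add_neg_cancel, S.dx_zero] at h
  exact eq_neg_of_add_eq_zero_right h.symm

lemma dx_sub (X Y : V) (f : F) : S.D (X - Y) f = S.D X f - S.D Y f := by
  rw [sub_eq_add_neg, S.D_addX, S.dx_neg]; ring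

lemma d_sum {ι : Type*} (s : Finset ι) (X : V) (a : ι → F) :
    S.D X (∑ i ∈ s, a i) = ∑ i ∈ s, S.D X (a i) := by
  classical
  induction s using Finset.induction with
  | empty => simp [S.d_zero]
  | insert _ _ h ih => rw [Finset.sum_insert h, S.D_add, ih, Finset.sum_insert h]

lemma dx_sum {ι : Type*} (s : Finset ι) (X : ι → V) (f : F) :
    S.D (∑ i ∈ s, X i) f = ∑ i ∈ s, S.D (X i) f := by
  classical
  induction s using Finset.induction with
  | empty => simp [S.dx_zero]
  | insert _ _ h ih => rw [Finset.sum_insert h, S.D_addX, ih, Finset.sum_insert h]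

lemma g_addr (X Y Z : V) : S.g X (Y + Z) = S.g X Y + S.g X Z := by
  rw [S.g_symm, S.g_addl, S.g_symm Y, S.g_symm Z]

lemma g_smulr (f : F) (X Y : V) : S.g X (f • Y) = f * S.g X Y := by
  rw [S.g_symm, S.g_smull, S.g_symm]

lemma g_zerol (X : V) : S.g 0 X = 0 := by
  have := S.g_addl 0 0 X; simpa using this.symm

lemma g_zeror (X : V) : S.g X 0 = 0 := by rw [S.g_symm, S.g_zerol]

lemma g_negl (X Y : V) : S.g (-X) Y = -S.g X Y := by
  have h := S.g_addl X (-X) Y; rw [add_neg_cancel, S.g_zerol] at h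
  exact eq_neg_of_add_eq_zero_right h.symm

lemma g_negr (X Y : V) : S.g X (-Y) = -S.g X Y := by
  rw [S.g_symm, S.g_negl, S.g_symm]

lemma g_subl (X Y Z : V) : S.g (X - Y) Z = S.g X Z - S.g Y Z := by
  rw [sub_eq_add_neg, S.g_addl, S.g_negl]; ring

lemma g_subr (X Y Z : V) : S.g X (Y - Z) = S.g X Y - S.g X Z := by
  rw [S.g_symm, S.g_subl, S.g_symm Y, S.g_symm Z]

lemma g_suml {ι : Type*} (s : Finset ι) (X : ι → V) (Y : V) :
    S.g (∑ i ∈ s, X i) Y = ∑ i ∈ s, S.g (X i) Y := by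
  classical
  induction s using Finset.induction with
  | empty => simp [S.g_zerol]
  | insert _ _ h ih => rw [Finset.sum_insert h, S.g_addl, ih, Finset.sum_insert h]

lemma g_sumr {ι : Type*} (s : Finset ι) (X : V) (Y : ι → V) :
    S.g X (∑ i ∈ s, Y i) = ∑ i ∈ s, S.g X (Y i) := by
  rw [S.g_symm, S.g_suml]; exact Finset.sum_congr rfl fun i _ => S.g_symm _ _

lemma bracket_addr (X Y Z : V) : S.bracket X (Y + Z) = S.bracket X Y + S.bracket X Z := by
  rw [S.bracket_antisymm, S.bracket_addl, S.bracket_antisymm Y, S.bracket_antisymm Z]; abel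

lemma bracket_zerol (X : V) : S.bracket 0 X = 0 := by
  have := S.bracket_addl 0 0 X
  simpa using this.symm

lemma bracket_zeror (X : V) : S.bracket X 0 = 0 := by
  rw [S.bracket_antisymm, S.bracket_zerol, neg_zero]

lemma bracket_negl (X Y : V) : S.bracket (-X) Y = -S.bracket X Y := by
  have h := S.bracket_addl X (-X) Y; rw [add_neg_cancel, S.bracket_zerol] at h
  exact (neg_eq_of_add_eq_zero_right h.symm).symm

lemma bracket_negr (X Y : V) : S.bracket X (-Y) = -S.bracket X Y := by
  rw [S.bracket_antisymm, S.bracket_negl, S.bracket_antisymm Y]; simp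

lemma bracket_subl (X Y Z : V) : S.bracket (X - Y) Z = S.bracket X Z - S.bracket Y Z := by
  rw [sub_eq_add_neg, S.bracket_addl, S.bracket_negl]; abel

lemma bracket_subr (X Y Z : V) : S.bracket X (Y - Z) = S.bracket X Y - S.bracket X Z := by
  rw [sub_eq_add_neg, S.bracket_addr, S.bracket_negr]; abel

/-- Division by two in an `ℝ`-algebra. -/
lemma half_add_self (a : F) : (1 / 2 : ℝ) • (a + a) = a := by
  rw [← two_smul ℝ a, smul_smul]; norm_num

lemma eq_zero_of_add_self (a : F) (h : a + a = 0) : a = 0 := by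
  have h2 := congrArg (fun x => (1 / 2 : ℝ) • x) h
  simp only [smul_zero] at h2
  rw [← half_add_self a]
  exact h2

end VFCalc

namespace VFCalc

variable {F : Type*} {V : Type*} [CommRing F] [Algebra ℝ F]
  [AddCommGroup V] [Module F V] (S : VFCalc F V)

section Grading
variable (G : TwoGrading S)

lemma vp_eq (A : V) : G.Vp A = A - G.H A :=
  eq_sub_of_add_eq (by rw [add_comm]; exact G.sum_eq A)

lemma H_zero : G.H 0 = 0 := by
  have := G.H_add 0 0; simpa using this.symm

lemma Vp_zero : G.Vp 0 = 0 := by rw [vp_eq, H_zero]; abel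

lemma H_neg (A : V) : G.H (-A) = -G.H A := by
  have h := G.H_add A (-A); rw [add_neg_cancel, H_zero] at h
  exact eq_neg_of_add_eq_zero_right h.symm

lemma H_sub (A B : V) : G.H (A - B) = G.H A - G.H B := by
  rw [sub_eq_add_neg, G.H_add, H_neg]; abel

lemma H_sum {ι : Type*} (s : Finset ι) (X : ι → V) :
    G.H (∑ i ∈ s, X i) = ∑ i ∈ s, G.H (X i) := by
  classical
  induction s using Finset.induction with
  | empty => simp [H_zero]
  | insert _ _ h ih => rw [Finset.sum_insert h, G.H_add, ih, Finset.sum_insert h]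

/-- `Vp A = A` iff `H A = 0`. -/
lemma vert_of_H_eq_zero {A : V} (h : G.H A = 0) : G.Vp A = A := by
  rw [vp_eq, h]; abel

lemma H_eq_zero_of_vert {A : V} (h : G.Vp A = A) : G.H A = 0 := by
  rw [← h]; exact G.H_Vp A

/-- Horizontal ⟂ vertical. -/
lemma g_horiz_vert {A B : V} (hA : G.H A = A) (hB : G.H B = 0) : S.g A B = 0 := by
  have hB' := vert_of_H_eq_zero S G hB
  calc S.g A B = S.g (G.H A) (G.Vp B) := by rw [hA, hB']
  _ = 0 := G.orth A B

lemma g_vert_horiz {A B : V} (hA : G.H A = 0) (hB : G.H B = B) : S.g A B = 0 := by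
  rw [S.g_symm]; exact g_horiz_vert S G hB hA

end Grading

section Conn
variable (nab : V → V → V)

lemma nab_zeror (hc : IsConnection S nab) (X : V) : nab X 0 = 0 := by
  have := hc.addY X 0 0; simpa using this.symm

lemma nab_negr (hc : IsConnection S nab) (X Y : V) : nab X (-Y) = -nab X Y := by
  have h := hc.addY X Y (-Y); rw [add_neg_cancel, nab_zeror S nab hc] at h
  exact eq_neg_of_add_eq_zero_right h.symm

lemma nab_subr (hc : IsConnection S nab) (X Y Z : V) :
    nab X (Y - Z) = nab X Y - nab X Z := by
  rw [sub_eq_add_neg, hc.addY, nab_negr S nab hc]; abel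

lemma nab_zerol (hc : IsConnection S nab) (X : V) : nab 0 X = 0 := by
  have := hc.addX 0 0 X; simpa using this.symm

lemma nab_negl (hc : IsConnection S nab) (X Y : V) : nab (-X) Y = -nab X Y := by
  have h := hc.addX X (-X) Y; rw [add_neg_cancel, nab_zerol S nab hc] at h
  exact eq_neg_of_add_eq_zero_right h.symm

lemma nab_subl (hc : IsConnection S nab) (X Y Z : V) :
    nab (X - Y) Z = nab X Z - nab Y Z := by
  rw [sub_eq_add_neg, hc.addX, nab_negl S nab hc]; abel

lemma nab_sumr (hc : IsConnection S nab) {ι : Type*} (s : Finset ι) (X : V) (Y : ι → V) :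
    nab X (∑ i ∈ s, Y i) = ∑ i ∈ s, nab X (Y i) := by
  classical
  induction s using Finset.induction with
  | empty => simp [nab_zeror S nab hc]
  | insert _ _ h ih => rw [Finset.sum_insert h, hc.addY, ih, Finset.sum_insert h]

lemma tor_antisymm (X Y : V) : tor S nab X Y = -tor S nab Y X := by
  simp only [tor, S.bracket_antisymm X Y]; abel

lemma tor_zerol (hc : IsConnection S nab) (X : V) : tor S nab 0 X = 0 := by
  simp [tor, nab_zerol S nab hc, nab_zeror S nab hc, S.bracket_zerol]

lemma tor_zeror (hc : IsConnection S nab) (X : V) : tor S nab X 0 = 0 := by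
  simp [tor, nab_zerol S nab hc, nab_zeror S nab hc, S.bracket_zeror]

lemma tor_addl (hc : IsConnection S nab) (X Y Z : V) :
    tor S nab (X + Y) Z = tor S nab X Z + tor S nab Y Z := by
  simp only [tor, hc.addX, hc.addY, S.bracket_addl]; abel

lemma tor_addr (hc : IsConnection S nab) (X Y Z : V) :
    tor S nab X (Y + Z) = tor S nab X Y + tor S nab X Z := by
  simp only [tor, hc.addX, hc.addY, S.bracket_addr]; abel

lemma curv_antisymm1 (hc : IsConnection S nab) (X Y Z : V) :
    curv S nab X Y Z = -curv S nab Y X Z := by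
  simp only [curv, S.bracket_antisymm X Y, nab_negl S nab hc]; abel

lemma nabTor_antisymm23 (hc : IsConnection S nab) (W Y Z : V) :
    nabTor S nab W Y Z = -nabTor S nab W Z Y := by
  simp only [nabTor, tor_antisymm S nab Z Y, tor_antisymm S nab Z (nab W Y),
    tor_antisymm S nab (nab W Z) Y, nab_negr S nab hc]
  abel

end Conn

end VFCalc

namespace VFCalc

variable {F : Type*} {V : Type*} [CommRing F] [Algebra ℝ F]
  [AddCommGroup V] [Module F V] (S : VFCalc F V) (G : TwoGrading S)
  (nab : V → V → V)

lemma Vp_neg (A : V) : G.Vp (-A) = -G.Vp A := by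
  rw [vp_eq, vp_eq, H_neg]; abel

lemma Vp_Vp (A : V) : G.Vp (G.Vp A) = G.Vp A := by
  rw [vp_eq S G (G.Vp A), G.H_Vp]; abel

lemma nab_horiz (hcan : IsCanonical S G nab) {Y : V} (hY : G.H Y = Y) (W : V) :
    G.H (nab W Y) = nab W Y := by
  conv_lhs => rw [← hcan.parH, hY]

lemma nab_vert (hcan : IsCanonical S G nab) {Z : V} (hZ : G.H Z = 0) (W : V) :
    G.H (nab W Z) = 0 := by
  rw [← hcan.parH]
  have hZ' := vert_of_H_eq_zero S G hZ
  calc nab W (G.H Z) = nab W 0 := by rw [hZ]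
  _ = 0 := nab_zeror S nab hcan.conn W

lemma tor_HH_vert (hcan : IsCanonical S G nab) {X Y : V}
    (hX : G.H X = X) (hY : G.H Y = Y) : G.H (tor S nab X Y) = 0 := by
  have := hcan.torHH X Y; rwa [hX, hY] at this

/-- A horizontal vector orthogonal to the whole horizontal frame vanishes. -/
lemma horiz_eq_zero {d : ℕ} {E : Fin d → V} (hE : IsHFrame S G E)
    {W : V} (hW : G.H W = W) (h : ∀ i, S.g W (E i) = 0) : W = 0 := by
  rw [hE.2.2 W hW]; simp [h]

lemma vert_eq_zero {m : ℕ} {U : Fin m → V} (hU : IsVFrame S G U)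
    {W : V} (hW : G.Vp W = W) (h : ∀ a, S.g W (U a) = 0) : W = 0 := by
  rw [hU.2.2 W hW]; simp [h]

/-- **Key consequence of strict normality: the mixed torsion vanishes.** -/
lemma tor_HV_eq_zero (hcan : IsCanonical S G nab)
    (hn0 : NormalV S G) (hn1 : NormalH S G)
    {d : ℕ} {E : Fin d → V} (hE : IsHFrame S G E)
    {m : ℕ} {U : Fin m → V} (hU : IsVFrame S G U)
    {X T : V} (hX : G.H X = X) (hT : G.H T = 0) : tor S nab X T = 0 := by
  have hT' : G.Vp T = T := vert_of_H_eq_zero S G hT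
  -- horizontal part
  have hpair : ∀ i, S.g (tor S nab X T) (E i) = 0 := by
    intro i
    have e1 : S.g (nab X T) (E i) = 0 :=
      g_vert_horiz S G (nab_vert S G nab hcan hT X) (hE.1 i)
    have e2 : S.g (nab (E i) T) X = 0 :=
      g_vert_horiz S G (nab_vert S G nab hcan hT (E i)) hX
    have m1 := hcan.metric T X (E i)
    have n1 := hn0 X (E i) T hX (hE.1 i) hT'
    have key : S.g (tor S nab X T) (E i) + S.g (tor S nab (E i) T) X = 0 := by
      simp only [tor, S.g_subl]
      linear_combination e1 + e2 + m1 - n1 + S.g_symm X (nab T (E i))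
    have sym := hcan.torSymH X (E i) T
    rw [hX, hE.1 i, hT'] at sym
    rw [← sym] at key
    exact eq_zero_of_add_self _ key
  have hH : G.H (tor S nab X T) = 0 := by
    apply horiz_eq_zero S G hE (G.H_H _)
    intro i
    have : S.g (G.Vp (tor S nab X T)) (E i) = 0 :=
      g_vert_horiz S G (G.H_Vp _) (hE.1 i)
    have hs := G.sum_eq (tor S nab X T)
    calc S.g (G.H (tor S nab X T)) (E i)
        = S.g (G.H (tor S nab X T)) (E i) + S.g (G.Vp (tor S nab X T)) (E i) := by
          rw [this]; ring
      _ = S.g (tor S nab X T) (E i) := by rw [← S.g_addl, hs]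
      _ = 0 := hpair i
  -- vertical part, argue with `tor T X`
  have vpair : ∀ a, S.g (tor S nab T X) (U a) = 0 := by
    intro a
    have hUa : G.H (U a) = 0 := H_eq_zero_of_vert S G (hU.1 a)
    have e1 : S.g (nab T X) (U a) = 0 :=
      g_horiz_vert S G (nab_horiz S G nab hcan hX T) hUa
    have e2 : S.g (nab (U a) X) T = 0 :=
      g_horiz_vert S G (nab_horiz S G nab hcan hX (U a)) hT
    have m1 := hcan.metric X T (U a)
    have n1 := hn1 T (U a) X hT' (hU.1 a) hX
    have key : S.g (tor S nab T X) (U a) + S.g (tor S nab (U a) X) T = 0 := by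
      simp only [tor, S.g_subl]
      linear_combination e1 + e2 + m1 - n1 + S.g_symm T (nab X (U a))
    have sym := hcan.torSymV T (U a) X
    rw [hT', hU.1 a, hX] at sym
    rw [← sym] at key
    exact eq_zero_of_add_self _ key
  have hV : G.Vp (tor S nab T X) = 0 := by
    apply vert_eq_zero S G hU (Vp_Vp S G _)
    intro a
    have hUa : G.H (U a) = 0 := H_eq_zero_of_vert S G (hU.1 a)
    have : S.g (G.H (tor S nab T X)) (U a) = 0 :=
      g_horiz_vert S G (G.H_H _) hUa
    have hs := G.sum_eq (tor S nab T X)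
    calc S.g (G.Vp (tor S nab T X)) (U a)
        = S.g (G.H (tor S nab T X)) (U a) + S.g (G.Vp (tor S nab T X)) (U a) := by
          rw [this]; ring
      _ = S.g (tor S nab T X) (U a) := by rw [← S.g_addl, hs]
      _ = 0 := vpair a
  have hV' : G.Vp (tor S nab X T) = 0 := by
    rw [tor_antisymm S nab X T, Vp_neg, hV, neg_zero]
  have := G.sum_eq (tor S nab X T)
  rw [hH, hV'] at this
  simpa using this.symm

/-- Under integrability of `VM`, the vertical-vertical torsion vanishes. -/
lemma tor_VV_eq_zero (hcan : IsCanonical S G nab) (hint : IntegrableV S G)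
    {T T' : V} (hT : G.H T = 0) (hT' : G.H T' = 0) : tor S nab T T' = 0 := by
  have h1 : G.Vp T = T := vert_of_H_eq_zero S G hT
  have h2 : G.Vp T' = T' := vert_of_H_eq_zero S G hT'
  have hVp := hcan.torVV T T'
  rw [h1, h2] at hVp
  have hbr := hint T T'
  rw [h1, h2] at hbr
  have hH : G.H (tor S nab T T') = 0 := by
    simp only [tor, H_sub, hbr, nab_vert S G nab hcan hT' T, nab_vert S G nab hcan hT T']
    abel
  have := G.sum_eq (tor S nab T T')
  rw [hH, hVp] at this
  simpa using this.symm

end VFCalc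

namespace VFCalc

variable {F : Type*} {V : Type*} [CommRing F] [Algebra ℝ F]
  [AddCommGroup V] [Module F V] (S : VFCalc F V) (G : TwoGrading S)
  (nab : V → V → V)

lemma curv_pair_antisymm (hm : MetricCompat S nab) (A B Y Z : V) :
    S.g (curv S nab A B Y) Z = -S.g (curv S nab A B Z) Y := by
  have db := S.D_bracket A B (S.g Y Z)
  have e1 : S.D A (S.D B (S.g Y Z))
      = S.g (nab A (nab B Y)) Z + S.g (nab B Y) (nab A Z)
        + (S.g (nab A Y) (nab B Z) + S.g Y (nab A (nab B Z))) := by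
    rw [hm B Y Z, S.D_add, hm A (nab B Y) Z, hm A Y (nab B Z)]
  have e2 : S.D B (S.D A (S.g Y Z))
      = S.g (nab B (nab A Y)) Z + S.g (nab A Y) (nab B Z)
        + (S.g (nab B Y) (nab A Z) + S.g Y (nab B (nab A Z))) := by
    rw [hm A Y Z, S.D_add, hm B (nab A Y) Z, hm B Y (nab A Z)]
  have e3 := hm (S.bracket A B) Y Z
  simp only [curv, S.g_subl]
  linear_combination -e1 + e2 + e3 - db - S.g_symm Y (nab A (nab B Z))
    + S.g_symm Y (nab B (nab A Z)) + S.g_symm Y (nab (S.bracket A B) Z)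

lemma curv_horiz (hcan : IsCanonical S G nab) {Z : V} (hZ : G.H Z = Z) (W T : V) :
    G.H (curv S nab W T Z) = curv S nab W T Z := by
  simp only [curv, H_sub,
    nab_horiz S G nab hcan (nab_horiz S G nab hcan hZ T) W,
    nab_horiz S G nab hcan (nab_horiz S G nab hcan hZ W) T,
    nab_horiz S G nab hcan hZ (S.bracket W T)]

lemma curv_vert (hcan : IsCanonical S G nab) {Z : V} (hZ : G.H Z = 0) (W T : V) :
    G.H (curv S nab W T Z) = 0 := by
  simp only [curv, H_sub,
    nab_vert S G nab hcan (nab_vert S G nab hcan hZ T) W,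
    nab_vert S G nab hcan (nab_vert S G nab hcan hZ W) T,
    nab_vert S G nab hcan hZ (S.bracket W T)]
  abel

/-- The Bianchi-type identity for a mixed curvature, given vanishing mixed
torsion. -/
lemma curv_mixed_identity (hc : IsConnection S nab) {X Y T : V}
    (e1 : tor S nab X T = 0) (e2 : tor S nab Y T = 0) :
    curv S nab X T Y - curv S nab Y T X
      = curv S nab X Y T + tor S nab (S.bracket X Y) T
        - tor S nab X (S.bracket Y T) + tor S nab Y (S.bracket X T)
        - nab T (tor S nab X Y) := by
  have b1 : S.bracket X T = nab X T - nab T X := by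
    simp only [tor] at e1
    rw [← sub_eq_zero, show S.bracket X T - (nab X T - nab T X)
      = -(nab X T - nab T X - S.bracket X T) from by abel, e1]
    exact neg_zero
  have b2 : S.bracket Y T = nab Y T - nab T Y := by
    simp only [tor] at e2
    rw [← sub_eq_zero, show S.bracket Y T - (nab Y T - nab T Y)
      = -(nab Y T - nab T Y - S.bracket Y T) from by abel, e2]
    exact neg_zero
  have j : S.bracket T (S.bracket X Y)
      = -S.bracket X (S.bracket Y T) - S.bracket Y (S.bracket T X) := by
    have h := S.jacobi T X Y
    rw [← sub_eq_zero, show S.bracket T (S.bracket X Y)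
        - (-S.bracket X (S.bracket Y T) - S.bracket Y (S.bracket T X))
      = S.bracket T (S.bracket X Y) + S.bracket X (S.bracket Y T)
        + S.bracket Y (S.bracket T X) from by abel]
    rw [show S.bracket T (S.bracket X Y) + S.bracket X (S.bracket Y T)
        + S.bracket Y (S.bracket T X) = S.bracket T (S.bracket X Y)
        + (S.bracket X (S.bracket Y T) + S.bracket Y (S.bracket T X)) from by abel]
    rw [← h]; abel
  simp only [curv, tor]
  rw [S.bracket_antisymm (S.bracket X Y) T, j, S.bracket_antisymm T X, b1, b2]
  simp only [nab_subl S nab hc, nab_subr S nab hc, nab_negl S nab hc,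
    nab_negr S nab hc, S.bracket_subr, S.bracket_negr, S.bracket_subl,
    S.bracket_negl]
  abel

end VFCalc

namespace VFCalc

variable {F : Type*} {V : Type*} [CommRing F] [Algebra ℝ F]
  [AddCommGroup V] [Module F V] (S : VFCalc F V) (G : TwoGrading S)
  (nab : V → V → V)

lemma curv_mixed_symm (hcan : IsCanonical S G nab)
    (hn0 : NormalV S G) (hn1 : NormalH S G) (hint : IntegrableV S G)
    {d : ℕ} {E : Fin d → V} (hE : IsHFrame S G E)
    {m : ℕ} {U : Fin m → V} (hU : IsVFrame S G U)
    {X Y Z T : V} (hX : G.H X = X) (hY : G.H Y = Y) (hZ : G.H Z = Z)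
    (hT : G.H T = 0) :
    S.g (curv S nab X T Y) Z = S.g (curv S nab Y T X) Z := by
  have e1 := tor_HV_eq_zero S G nab hcan hn0 hn1 hE hU hX hT
  have e2 := tor_HV_eq_zero S G nab hcan hn0 hn1 hE hU hY hT
  have hid := curv_mixed_identity S nab hcan.conn e1 e2
  have p1 : S.g (curv S nab X Y T) Z = 0 :=
    g_vert_horiz S G (curv_vert S G nab hcan hT X Y) hZ
  have p2 : S.g (tor S nab (S.bracket X Y) T) Z = 0 := by
    have h1 : tor S nab (G.H (S.bracket X Y)) T = 0 :=
      tor_HV_eq_zero S G nab hcan hn0 hn1 hE hU (G.H_H _) hT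
    have h2 : tor S nab (G.Vp (S.bracket X Y)) T = 0 :=
      tor_VV_eq_zero S G nab hcan hint (G.H_Vp _) hT
    calc S.g (tor S nab (S.bracket X Y) T) Z
        = S.g (tor S nab (G.H (S.bracket X Y) + G.Vp (S.bracket X Y)) T) Z := by
          rw [G.sum_eq]
      _ = 0 := by
          rw [tor_addl S nab hcan.conn, h1, h2, add_zero, S.g_zerol]
  have p3 : S.g (tor S nab X (S.bracket Y T)) Z = 0 := by
    have h2 : tor S nab X (G.Vp (S.bracket Y T)) = 0 :=
      tor_HV_eq_zero S G nab hcan hn0 hn1 hE hU hX (G.H_Vp _)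
    have h1 : S.g (tor S nab X (G.H (S.bracket Y T))) Z = 0 :=
      g_vert_horiz S G (tor_HH_vert S G nab hcan hX (G.H_H _)) hZ
    calc S.g (tor S nab X (S.bracket Y T)) Z
        = S.g (tor S nab X (G.H (S.bracket Y T) + G.Vp (S.bracket Y T))) Z := by
          rw [G.sum_eq]
      _ = 0 := by rw [tor_addr S nab hcan.conn, h2, add_zero, h1]
  have p4 : S.g (tor S nab Y (S.bracket X T)) Z = 0 := by
    have h2 : tor S nab Y (G.Vp (S.bracket X T)) = 0 :=
      tor_HV_eq_zero S G nab hcan hn0 hn1 hE hU hY (G.H_Vp _)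
    have h1 : S.g (tor S nab Y (G.H (S.bracket X T))) Z = 0 :=
      g_vert_horiz S G (tor_HH_vert S G nab hcan hY (G.H_H _)) hZ
    calc S.g (tor S nab Y (S.bracket X T)) Z
        = S.g (tor S nab Y (G.H (S.bracket X T) + G.Vp (S.bracket X T))) Z := by
          rw [G.sum_eq]
      _ = 0 := by rw [tor_addr S nab hcan.conn, h2, add_zero, h1]
  have p5 : S.g (nab T (tor S nab X Y)) Z = 0 :=
    g_vert_horiz S G (nab_vert S G nab hcan (tor_HH_vert S G nab hcan hX hY) T) hZ
  have hgl := congrArg (fun W => S.g W Z) hid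
  simp only [S.g_subl, S.g_addl] at hgl
  linear_combination hgl + p1 + p2 - p3 + p4 - p5

/-- **Key curvature vanishing**: `Rm(X,T,Y,Z) = 0` for horizontal `X,Y,Z`,
vertical `T`. -/
lemma curv_mixed_zero (hcan : IsCanonical S G nab)
    (hn0 : NormalV S G) (hn1 : NormalH S G) (hint : IntegrableV S G)
    {d : ℕ} {E : Fin d → V} (hE : IsHFrame S G E)
    {m : ℕ} {U : Fin m → V} (hU : IsVFrame S G U)
    {X Y Z T : V} (hX : G.H X = X) (hY : G.H Y = Y) (hZ : G.H Z = Z)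
    (hT : G.H T = 0) :
    S.g (curv S nab X T Y) Z = 0 := by
  have sym : ∀ A B C : V, G.H A = A → G.H B = B → G.H C = C →
      S.g (curv S nab A T B) C = S.g (curv S nab B T A) C := fun A B C hA hB hC =>
    curv_mixed_symm S G nab hcan hn0 hn1 hint hE hU hA hB hC hT
  have anti := curv_pair_antisymm S nab hcan.metric
  have key : S.g (curv S nab X T Y) Z = -S.g (curv S nab X T Y) Z := by
    calc S.g (curv S nab X T Y) Z
        = S.g (curv S nab Y T X) Z := sym X Y Z hX hY hZ
      _ = -S.g (curv S nab Y T Z) X := anti Y T X Z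
      _ = -S.g (curv S nab Z T Y) X := by rw [sym Y Z X hY hZ hX]
      _ = -(-S.g (curv S nab Z T X) Y) := by rw [anti Z T Y X]
      _ = S.g (curv S nab Z T X) Y := by rw [neg_neg]
      _ = S.g (curv S nab X T Z) Y := sym Z X Y hZ hX hY
      _ = -S.g (curv S nab X T Y) Z := anti X T Z Y
  have : S.g (curv S nab X T Y) Z + S.g (curv S nab X T Y) Z = 0 := by
    nth_rewrite 2 [key]
    exact add_neg_cancel _
  exact eq_zero_of_add_self _ this

end VFCalc

namespace VFCalc

variable {F : Type*} {V : Type*} [CommRing F] [Algebra ℝ F]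
  [AddCommGroup V] [Module F V] (S : VFCalc F V) (G : TwoGrading S)
  (nab : V → V → V)

/-- The third covariant derivative of a function. -/
def nabla3 (f : F) (W Z Y : V) : F :=
  S.D W (hess S nab f Z Y) - hess S nab f (nab W Z) Y - hess S nab f Z (nab W Y)

lemma hess_comm (f : F) (W Z : V) :
    hess S nab f W Z - hess S nab f Z W = -S.D (tor S nab W Z) f := by
  simp only [hess, tor, S.dx_sub, S.D_bracket]; ring

lemma hess_addl (hc : IsConnection S nab) (f : F) (A B Y : V) :
    hess S nab f (A + B) Y = hess S nab f A Y + hess S nab f B Y := by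
  simp only [hess, S.D_addX, hc.addX]; ring

lemma hess_smull (hc : IsConnection S nab) (f c : F) (A Y : V) :
    hess S nab f (c • A) Y = c * hess S nab f A Y := by
  simp only [hess, S.D_smulX, hc.smulX]; ring

lemma hess_addr (hc : IsConnection S nab) (f : F) (A Y Z : V) :
    hess S nab f A (Y + Z) = hess S nab f A Y + hess S nab f A Z := by
  simp only [hess, S.D_addX, hc.addY, S.D_add]; ring

lemma hess_smulr (hc : IsConnection S nab) (f c : F) (A Y : V) :
    hess S nab f A (c • Y) = c * hess S nab f A Y := by
  simp only [hess, S.D_smulX, hc.leibniz, S.D_addX, S.D_mul]; ring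

lemma hess_zerol (hc : IsConnection S nab) (f : F) (Y : V) :
    hess S nab f 0 Y = 0 := by
  have := hess_smull S nab hc f 0 0 Y; simpa using this

lemma hess_suml (hc : IsConnection S nab) (f : F) {ι : Type*} (s : Finset ι)
    (a : ι → F) (X : ι → V) (Y : V) :
    hess S nab f (∑ j ∈ s, a j • X j) Y = ∑ j ∈ s, a j * hess S nab f (X j) Y := by
  classical
  induction s using Finset.induction with
  | empty => simp [hess_zerol S nab hc]
  | insert _ _ h ih =>
      rw [Finset.sum_insert h, hess_addl S nab hc, hess_smull S nab hc, ih,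
        Finset.sum_insert h]

lemma hess_zeror (hc : IsConnection S nab) (f : F) (Y : V) :
    hess S nab f Y 0 = 0 := by
  have := hess_smulr S nab hc f 0 Y 0; simpa using this

lemma hess_sumr (hc : IsConnection S nab) (f : F) {ι : Type*} (s : Finset ι)
    (a : ι → F) (X : ι → V) (Y : V) :
    hess S nab f Y (∑ j ∈ s, a j • X j) = ∑ j ∈ s, a j * hess S nab f Y (X j) := by
  classical
  induction s using Finset.induction with
  | empty => simp [hess_zeror S nab hc]
  | insert _ _ h ih =>
      rw [Finset.sum_insert h, hess_addr S nab hc, hess_smulr S nab hc, ih,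
        Finset.sum_insert h]

/-- Ricci-type commutation in the first two slots of the third derivative. -/
lemma nabla3_comm12 (hc : IsConnection S nab) (f : F) (W Z Y : V) :
    nabla3 S nab f W Z Y - nabla3 S nab f Z W Y
      = -S.D (curv S nab W Z Y) f - hess S nab f (tor S nab W Z) Y := by
  simp only [nabla3, hess, curv, tor, nab_subl S nab hc, S.dx_sub, S.d_sub,
    S.D_bracket]
  ring

/-- Commutation in the last two slots of the third derivative. -/
lemma nabla3_comm23 (hc : IsConnection S nab) (f : F) (W Z Y : V) :
    nabla3 S nab f W Z Y - nabla3 S nab f W Y Z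
      = -hess S nab f W (tor S nab Z Y) - S.D (nabTor S nab W Z Y) f := by
  simp only [nabla3, hess, nabTor, tor, nab_subl S nab hc, nab_subr S nab hc,
    S.dx_sub, S.d_sub, S.D_bracket]
  ring

end VFCalc

namespace VFCalc

variable {F : Type*} {V : Type*} [CommRing F] [Algebra ℝ F]
  [AddCommGroup V] [Module F V] (S : VFCalc F V) (G : TwoGrading S)
  (nab : V → V → V)

lemma grad0_horiz {d : ℕ} {E : Fin d → V} (hE : IsHFrame S G E) (f : F) :
    G.H (grad0 S E f) = grad0 S E f := by
  simp only [grad0, H_sum, G.H_smul]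
  exact Finset.sum_congr rfl fun i _ => by rw [hE.1 i]

lemma grad1_vert {m : ℕ} {U : Fin m → V} (hU : IsVFrame S G U) (f : F) :
    G.H (grad1 S U f) = 0 := by
  simp only [grad1, H_sum, G.H_smul]
  apply Finset.sum_eq_zero
  intro a _
  rw [H_eq_zero_of_vert S G (hU.1 a), smul_zero]

lemma d_horiz_eq_g {d : ℕ} {E : Fin d → V} (hE : IsHFrame S G E)
    {Z : V} (hZ : G.H Z = Z) (f : F) : S.D Z f = S.g (grad0 S E f) Z := by
  conv_lhs => rw [hE.2.2 Z hZ]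
  rw [S.dx_sum, grad0, S.g_suml]
  apply Finset.sum_congr rfl
  intro i _
  rw [S.D_smulX, S.g_smull, S.g_symm (E i) Z]
  ring

lemma d_vert_eq_g {m : ℕ} {U : Fin m → V} (hU : IsVFrame S G U)
    {Z : V} (hZ : G.Vp Z = Z) (f : F) : S.D Z f = S.g (grad1 S U f) Z := by
  conv_lhs => rw [hU.2.2 Z hZ]
  rw [S.dx_sum, grad1, S.g_suml]
  apply Finset.sum_congr rfl
  intro a _
  rw [S.D_smulX, S.g_smull, S.g_symm (U a) Z]
  ring

lemma d_eq_g_full {d : ℕ} {E : Fin d → V} (hE : IsHFrame S G E)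
    {m : ℕ} {U : Fin m → V} (hU : IsVFrame S G U) (Z : V) (f : F) :
    S.D Z f = S.g (grad0 S E f) Z + S.g (grad1 S U f) Z := by
  have h1 : S.D Z f = S.D (G.H Z) f + S.D (G.Vp Z) f := by
    conv_lhs => rw [← G.sum_eq Z]
    rw [S.D_addX]
  have h2 : S.D (G.H Z) f = S.g (grad0 S E f) (G.H Z) :=
    d_horiz_eq_g S G hE (G.H_H Z) f
  have h3 : S.D (G.Vp Z) f = S.g (grad1 S U f) (G.Vp Z) := by
    apply d_vert_eq_g S G hU (Vp_Vp S G Z) f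
  have h4 : S.g (grad0 S E f) (G.Vp Z) = 0 :=
    g_horiz_vert S G (grad0_horiz S G hE f) (G.H_Vp Z)
  have h5 : S.g (grad1 S U f) (G.H Z) = 0 :=
    g_vert_horiz S G (grad1_vert S G hU f) (G.H_H Z)
  have h6 : S.g (grad0 S E f) Z
      = S.g (grad0 S E f) (G.H Z) + S.g (grad0 S E f) (G.Vp Z) := by
    conv_lhs => rw [← G.sum_eq Z]
    rw [S.g_addr]
  have h7 : S.g (grad1 S U f) Z
      = S.g (grad1 S U f) (G.H Z) + S.g (grad1 S U f) (G.Vp Z) := by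
    conv_lhs => rw [← G.sum_eq Z]
    rw [S.g_addr]
  rw [h1, h2, h3, h6, h7, h4, h5]
  ring

lemma hess_eq_g_grad0 (hcan : IsCanonical S G nab)
    {d : ℕ} {E : Fin d → V} (hE : IsHFrame S G E)
    {Z : V} (hZ : G.H Z = Z) (W : V) (f : F) :
    hess S nab f W Z = S.g (nab W (grad0 S E f)) Z := by
  have m1 := hcan.metric W (grad0 S E f) Z
  have h1 : S.D Z f = S.g (grad0 S E f) Z := d_horiz_eq_g S G hE hZ f
  have h2 : S.D (nab W Z) f = S.g (grad0 S E f) (nab W Z) :=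
    d_horiz_eq_g S G hE (nab_horiz S G nab hcan hZ W) f
  simp only [hess]
  rw [h1, h2]
  linear_combination m1

lemma hess_eq_g_grad1 (hcan : IsCanonical S G nab)
    {m : ℕ} {U : Fin m → V} (hU : IsVFrame S G U)
    {Z : V} (hZ : G.H Z = 0) (W : V) (f : F) :
    hess S nab f W Z = S.g (nab W (grad1 S U f)) Z := by
  have m1 := hcan.metric W (grad1 S U f) Z
  have h1 : S.D Z f = S.g (grad1 S U f) Z :=
    d_vert_eq_g S G hU (vert_of_H_eq_zero S G hZ) f
  have h2 : S.D (nab W Z) f = S.g (grad1 S U f) (nab W Z) :=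
    d_vert_eq_g S G hU (vert_of_H_eq_zero S G (nab_vert S G nab hcan hZ W)) f
  simp only [hess]
  rw [h1, h2]
  linear_combination m1

/-- The frame-correction terms in the covariant derivative of the trace of the
Hessian cancel. -/
lemma hess_frame_cancel (hcan : IsCanonical S G nab)
    {d : ℕ} {E : Fin d → V} (hE : IsHFrame S G E) (f : F) (W : V) :
    ∑ i, (hess S nab f (nab W (E i)) (E i) + hess S nab f (E i) (nab W (E i)))
      = 0 := by
  classical
  set c : Fin d → Fin d → F := fun i j => S.g (nab W (E i)) (E j) with hc
  set q : Fin d → Fin d → F := fun i j =>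
    hess S nab f (E i) (E j) + hess S nab f (E j) (E i) with hq
  have hanti : ∀ i j, c i j + c j i = 0 := by
    intro i j
    have m1 := hcan.metric W (E i) (E j)
    have hconst : S.D W (S.g (E i) (E j)) = 0 := by
      rw [hE.2.1 i j]
      by_cases h : i = j <;> simp [h, S.d_one, S.d_zero]
    rw [hconst] at m1
    simp only [hc]
    linear_combination -m1 + S.g_symm (nab W (E j)) (E i)
  have hexp : ∀ i, nab W (E i) = ∑ j, c i j • E j := fun i =>
    hE.2.2 _ (nab_horiz S G nab hcan (hE.1 i) W)
  have hmain : ∑ i, (hess S nab f (nab W (E i)) (E i)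
      + hess S nab f (E i) (nab W (E i))) = ∑ i, ∑ j, c i j * q i j := by
    apply Finset.sum_congr rfl
    intro i _
    rw [hexp i, hess_suml S nab hcan.conn, hess_sumr S nab hcan.conn,
      ← Finset.sum_add_distrib]
    apply Finset.sum_congr rfl
    intro j _
    simp only [hq]
    ring
  rw [hmain]
  set A := ∑ i, ∑ j, c i j * q i j with hA
  have hsymq : ∀ i j, q i j = q j i := by intro i j; simp only [hq]; ring
  have hAA : A + A = 0 := by
    have h2 : A = ∑ i, ∑ j, c j i * q i j := by
      rw [hA, Finset.sum_comm]
      apply Finset.sum_congr rfl; intro i _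
      apply Finset.sum_congr rfl; intro j _
      rw [hsymq j i]
    calc A + A = (∑ i, ∑ j, c i j * q i j) + ∑ i, ∑ j, c j i * q i j := by
          nth_rewrite 2 [h2]
          rw [hA]
      _ = ∑ i, ∑ j, (c i j * q i j + c j i * q i j) := by
          rw [← Finset.sum_add_distrib]
          apply Finset.sum_congr rfl; intro i _
          rw [← Finset.sum_add_distrib]
      _ = 0 := by
          apply Finset.sum_eq_zero; intro i _
          apply Finset.sum_eq_zero; intro j _
          have := hanti i j
          linear_combination q i j * this
  exact eq_zero_of_add_self _ hAA

/-- Derivative of the horizontal Laplacian as a trace of third derivatives. -/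
lemma d_lap (hcan : IsCanonical S G nab)
    {d : ℕ} {E : Fin d → V} (hE : IsHFrame S G E) (f : F) (W : V) :
    S.D W (lap S nab E f) = ∑ i, nabla3 S nab f W (E i) (E i) := by
  have hl : lap S nab E f = ∑ i, hess S nab f (E i) (E i) := rfl
  rw [hl, S.d_sum]
  have hstep : ∀ i : Fin d, S.D W (hess S nab f (E i) (E i))
      = nabla3 S nab f W (E i) (E i)
        + (hess S nab f (nab W (E i)) (E i)
          + hess S nab f (E i) (nab W (E i))) := by
    intro i; simp only [nabla3]; ring
  calc ∑ i, S.D W (hess S nab f (E i) (E i))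
      = ∑ i, (nabla3 S nab f W (E i) (E i)
        + (hess S nab f (nab W (E i)) (E i)
          + hess S nab f (E i) (nab W (E i)))) :=
        Finset.sum_congr rfl fun i _ => hstep i
    _ = (∑ i, nabla3 S nab f W (E i) (E i))
        + ∑ i, (hess S nab f (nab W (E i)) (E i)
          + hess S nab f (E i) (nab W (E i))) := Finset.sum_add_distrib
    _ = ∑ i, nabla3 S nab f W (E i) (E i) := by
        rw [hess_frame_cancel S G nab hcan hE f W, add_zero]

/-- Bochner's preliminary identity for `Δ₀|P|²`. -/
lemma lap_g_self (hcan : IsCanonical S G nab)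
    {d : ℕ} (E : Fin d → V) (P : V) :
    (1 / 2 : ℝ) • lap S nab E (S.g P P)
      = ∑ i, (S.g (nab (E i) (nab (E i) P)) P - S.g (nab (nab (E i) (E i)) P) P
          + S.g (nab (E i) P) (nab (E i) P)) := by
  have hl : lap S nab E (S.g P P) = ∑ i,
      ((S.g (nab (E i) (nab (E i) P)) P - S.g (nab (nab (E i) (E i)) P) P
          + S.g (nab (E i) P) (nab (E i) P))
        + (S.g (nab (E i) (nab (E i) P)) P - S.g (nab (nab (E i) (E i)) P) P
          + S.g (nab (E i) P) (nab (E i) P))) := by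
    apply Finset.sum_congr rfl
    intro i _
    have e1 := hcan.metric (E i) P P
    have e2 : S.D (E i) (S.D (E i) (S.g P P))
        = S.g (nab (E i) (nab (E i) P)) P + S.g (nab (E i) P) (nab (E i) P)
          + (S.g (nab (E i) P) (nab (E i) P) + S.g P (nab (E i) (nab (E i) P))) := by
      rw [e1, S.D_add, hcan.metric (E i) (nab (E i) P) P,
        hcan.metric (E i) P (nab (E i) P)]
    have e3 := hcan.metric (nab (E i) (E i)) P P
    linear_combination e2 - e3 + S.g_symm P (nab (E i) (nab (E i) P))
      - S.g_symm P (nab (nab (E i) (E i)) P)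
  rw [hl, Finset.smul_sum]
  exact Finset.sum_congr rfl fun i _ => half_add_self _

end VFCalc

namespace VFCalc

variable {F : Type*} {V : Type*} [CommRing F] [Algebra ℝ F]
  [AddCommGroup V] [Module F V] (S : VFCalc F V) (G : TwoGrading S)
  (nab : V → V → V)

lemma bochner_vert (hcan : IsCanonical S G nab)
    (hn0 : NormalV S G) (hn1 : NormalH S G) (hint : IntegrableV S G)
    {d : ℕ} {E : Fin d → V} (hE : IsHFrame S G E)
    {m : ℕ} {U : Fin m → V} (hU : IsVFrame S G U) (f : F) :
    (1 / 2 : ℝ) • lap S nab E (S.g (grad1 S U f) (grad1 S U f))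
        - S.g (grad1 S U f) (grad1 S U (lap S nab E f))
      = ∑ i, S.g (nab (E i) (grad1 S U f)) (nab (E i) (grad1 S U f)) := by
  set Y1 := grad1 S U f with hY1
  have hY1v : G.H Y1 = 0 := grad1_vert S G hU f
  have h1 := lap_g_self S G nab hcan E Y1
  have h2 : S.g Y1 (grad1 S U (lap S nab E f)) = S.D Y1 (lap S nab E f) := by
    rw [S.g_symm, ← d_vert_eq_g S G hU (vert_of_H_eq_zero S G hY1v) (lap S nab E f)]
  have h3 := d_lap S G nab hcan hE f Y1
  -- second covariant derivative identity
  have h4 : ∀ i : Fin d, S.g (nab (E i) (nab (E i) Y1)) Y1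
      - S.g (nab (nab (E i) (E i)) Y1) Y1 = nabla3 S nab f (E i) (E i) Y1 := by
    intro i
    have a1 : hess S nab f (E i) Y1 = S.g (nab (E i) Y1) Y1 :=
      hess_eq_g_grad1 S G nab hcan hU hY1v (E i) f
    have a2 : hess S nab f (nab (E i) (E i)) Y1 = S.g (nab (nab (E i) (E i)) Y1) Y1 :=
      hess_eq_g_grad1 S G nab hcan hU hY1v (nab (E i) (E i)) f
    have a3 : hess S nab f (E i) (nab (E i) Y1) = S.g (nab (E i) Y1) (nab (E i) Y1) :=
      hess_eq_g_grad1 S G nab hcan hU (nab_vert S G nab hcan hY1v (E i)) (E i) f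
    have a4 := hcan.metric (E i) (nab (E i) Y1) Y1
    simp only [nabla3]
    rw [a1, a2, a3]
    linear_combination -a4
  -- commutation across the slots
  have hcomm : ∀ i : Fin d, nabla3 S nab f (E i) (E i) Y1
      = nabla3 S nab f Y1 (E i) (E i) := by
    intro i
    have t0 : tor S nab (E i) Y1 = 0 :=
      tor_HV_eq_zero S G nab hcan hn0 hn1 hE hU (hE.1 i) hY1v
    have t1 : tor S nab (nab (E i) (E i)) Y1 = 0 :=
      tor_HV_eq_zero S G nab hcan hn0 hn1 hE hU
        (nab_horiz S G nab hcan (hE.1 i) (E i)) hY1v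
    have t2 : tor S nab (E i) (nab (E i) Y1) = 0 :=
      tor_HV_eq_zero S G nab hcan hn0 hn1 hE hU (hE.1 i)
        (nab_vert S G nab hcan hY1v (E i))
    have hnt : nabTor S nab (E i) (E i) Y1 = 0 := by
      simp only [nabTor]
      rw [t0, t1, t2, nab_zeror S nab hcan.conn]
      abel
    have c23 := nabla3_comm23 S nab hcan.conn f (E i) (E i) Y1
    rw [t0, hnt, hess_zeror S nab hcan.conn, S.dx_zero] at c23
    have c12 := nabla3_comm12 S nab hcan.conn f (E i) Y1 (E i)
    rw [t0, hess_zerol S nab hcan.conn] at c12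
    have hcurv : S.D (curv S nab (E i) Y1 (E i)) f = 0 := by
      rw [d_horiz_eq_g S G hE (curv_horiz S G nab hcan (hE.1 i) (E i) Y1) f,
        S.g_symm]
      exact curv_mixed_zero S G nab hcan hn0 hn1 hint hE hU (hE.1 i) (hE.1 i)
        (grad0_horiz S G hE f) hY1v
    rw [hcurv] at c12
    linear_combination c23 + c12
  rw [h1, h2, h3]
  have hfin : ∀ i : Fin d, S.g (nab (E i) (nab (E i) Y1)) Y1
      - S.g (nab (nab (E i) (E i)) Y1) Y1 + S.g (nab (E i) Y1) (nab (E i) Y1)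
      = nabla3 S nab f Y1 (E i) (E i) + S.g (nab (E i) Y1) (nab (E i) Y1) := by
    intro i
    rw [← hcomm i, ← h4 i]
  rw [Finset.sum_congr rfl fun i _ => hfin i, Finset.sum_add_distrib]
  ring

end VFCalc

namespace VFCalc

variable {F : Type*} {V : Type*} [CommRing F] [Algebra ℝ F]
  [AddCommGroup V] [Module F V] (S : VFCalc F V) (G : TwoGrading S)
  (nab : V → V → V)

lemma bochner_horiz (hcan : IsCanonical S G nab)
    (hn0 : NormalV S G) (hn1 : NormalH S G) (hint : IntegrableV S G)
    {d : ℕ} {E : Fin d → V} (hE : IsHFrame S G E)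
    {m : ℕ} {U : Fin m → V} (hU : IsVFrame S G U) (f : F) :
    (1 / 2 : ℝ) • lap S nab E (S.g (grad0 S E f) (grad0 S E f))
        - S.g (grad0 S E f) (grad0 S E (lap S nab E f))
      = BG S G nab E (grad0 S E f + grad1 S U f)
        + (∑ i, ∑ j, symhess S nab f (E i) (E j) * symhess S nab f (E i) (E j))
        - 2 * ∑ i, S.g (nab (E i) (grad1 S U f))
            (tor S nab (E i) (grad0 S E f)) := by
  classical
  set X := grad0 S E f with hXdef
  set Y1 := grad1 S U f with hY1def
  have hXh : G.H X = X := grad0_horiz S G hE f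
  have hY1v : G.H Y1 = 0 := grad1_vert S G hU f
  have hHA : G.H (X + Y1) = X := by rw [G.H_add, hXh, hY1v, add_zero]
  set q4 : F := algebraMap ℝ F (1 / 4) with hq4def
  have hq44 : q4 + q4 + q4 + q4 = 1 := by
    rw [hq4def, ← map_add, ← map_add, ← map_add, show (1:ℝ)/4 + 1/4 + 1/4 + 1/4 = 1 by norm_num,
      map_one]
  -- abbreviations
  set h : Fin d → Fin d → F := fun i j => hess S nab f (E i) (E j) with hhdef
  set w : Fin d → Fin d → F := fun i j => S.D (tor S nab (E i) (E j)) f with hwdef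
  -- LHS pieces
  have h1 := lap_g_self S G nab hcan E X
  have h2 : S.g X (grad0 S E (lap S nab E f)) = S.D X (lap S nab E f) := by
    rw [S.g_symm, ← d_horiz_eq_g S G hE hXh (lap S nab E f)]
  have h3 := d_lap S G nab hcan hE f X
  have h4 : ∀ i : Fin d, S.g (nab (E i) (nab (E i) X)) X
      - S.g (nab (nab (E i) (E i)) X) X = nabla3 S nab f (E i) (E i) X := by
    intro i
    have a1 : hess S nab f (E i) X = S.g (nab (E i) X) X :=
      hess_eq_g_grad0 S G nab hcan hE hXh (E i) f
    have a2 : hess S nab f (nab (E i) (E i)) X = S.g (nab (nab (E i) (E i)) X) X :=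
      hess_eq_g_grad0 S G nab hcan hE hXh (nab (E i) (E i)) f
    have a3 : hess S nab f (E i) (nab (E i) X) = S.g (nab (E i) X) (nab (E i) X) :=
      hess_eq_g_grad0 S G nab hcan hE (nab_horiz S G nab hcan hXh (E i)) (E i) f
    have a4 := hcan.metric (E i) (nab (E i) X) X
    simp only [nabla3]
    rw [a1, a2, a3]
    linear_combination -a4
  have h5 : ∀ i : Fin d, S.g (nab (E i) X) (nab (E i) X)
      = ∑ j, h i j * h i j := by
    intro i
    have hB : G.H (nab (E i) X) = nab (E i) X := nab_horiz S G nab hcan hXh (E i)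
    have hgen : S.g (nab (E i) X) (nab (E i) X)
        = ∑ j, S.g (nab (E i) X) (E j) * S.g (nab (E i) X) (E j) := by
      nth_rewrite 1 [hE.2.2 _ hB]
      rw [S.g_suml]
      apply Finset.sum_congr rfl
      intro j _
      rw [S.g_smull, S.g_symm (E j) (nab (E i) X)]
    rw [hgen]
    apply Finset.sum_congr rfl
    intro j _
    rw [show S.g (nab (E i) X) (E j) = h i j from
      (hess_eq_g_grad0 S G nab hcan hE (hE.1 j) (E i) f).symm]
  -- the main per-index commutation identity
  have hver : ∀ i : Fin d, G.H (tor S nab (E i) X) = 0 := fun i =>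
    tor_HH_vert S G nab hcan (hE.1 i) hXh
  have e_main : ∀ i : Fin d, nabla3 S nab f (E i) (E i) X
      - nabla3 S nab f X (E i) (E i)
      = S.g (curv S nab X (E i) (E i)) X + S.D (nabTor S nab (E i) X (E i)) f
        - 2 * S.g (nab (E i) Y1) (tor S nab (E i) X) := by
    intro i
    have c23 := nabla3_comm23 S nab hcan.conn f (E i) (E i) X
    have hanti' : S.D (nabTor S nab (E i) (E i) X) f
        = -S.D (nabTor S nab (E i) X (E i)) f := by
      rw [nabTor_antisymm23 S nab hcan.conn (E i) (E i) X, S.dx_neg]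
    have c12 := nabla3_comm12 S nab hcan.conn f (E i) X (E i)
    have t0 : tor S nab (E i) (tor S nab (E i) X) = 0 :=
      tor_HV_eq_zero S G nab hcan hn0 hn1 hE hU (hE.1 i) (hver i)
    have t0' : tor S nab (tor S nab (E i) X) (E i) = 0 := by
      rw [tor_antisymm S nab, t0, neg_zero]
    have a6 := hess_comm S nab f (tor S nab (E i) X) (E i)
    rw [t0', S.dx_zero, neg_zero] at a6
    have a7 : hess S nab f (E i) (tor S nab (E i) X)
        = S.g (nab (E i) Y1) (tor S nab (E i) X) :=
      hess_eq_g_grad1 S G nab hcan hU (hver i) (E i) f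
    have a8 : S.D (curv S nab (E i) X (E i)) f
        = S.g X (curv S nab (E i) X (E i)) :=
      d_horiz_eq_g S G hE (curv_horiz S G nab hcan (hE.1 i) (E i) X) f
    have a8' : S.g X (curv S nab (E i) X (E i))
        = -S.g X (curv S nab X (E i) (E i)) := by
      rw [curv_antisymm1 S nab hcan.conn (E i) X (E i), S.g_negr]
    have gsym : S.g X (curv S nab X (E i) (E i))
        = S.g (curv S nab X (E i) (E i)) X := S.g_symm _ _
    linear_combination c23 + c12 - hanti' - a8 - a8' + gsym - a6 - 2 * a7
  -- square-sum identity
  have hw_anti : ∀ i j, w j i = -w i j := by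
    intro i j
    simp only [hwdef]
    rw [tor_antisymm S nab (E j) (E i), S.dx_neg]
  have hji : ∀ i j, h j i = h i j + w i j := by
    intro i j
    have := hess_comm S nab f (E i) (E j)
    simp only [hhdef, hwdef]
    linear_combination -this
  have hq22 : ∀ i j : Fin d, symhess S nab f (E i) (E j) * symhess S nab f (E i) (E j)
      = h i j * h i j + h i j * w i j + q4 * (w i j * w i j) := by
    intro i j
    set q2 : F := algebraMap ℝ F (1 / 2) with hq2def
    have hq2q2 : q2 * q2 = q4 := by
      rw [hq2def, hq4def, ← map_mul]; norm_num
    have hq221 : q2 + q2 = 1 := by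
      rw [hq2def, ← map_add, show (1:ℝ)/2 + 1/2 = 1 by norm_num, map_one]
    simp only [symhess]
    rw [Algebra.smul_def, ← hq2def]
    rw [show hess S nab f (E j) (E i) = h j i from rfl,
      show hess S nab f (E i) (E j) = h i j from rfl, hji i j]
    linear_combination ((2*q2+1)*(h i j * h i j + h i j * w i j)) * hq221
      + (w i j * w i j) * hq2q2
  have hsum_s : ∑ i, ∑ j, symhess S nab f (E i) (E j) * symhess S nab f (E i) (E j)
      = (∑ i, ∑ j, h i j * h i j) + (∑ i, ∑ j, h i j * w i j)
        + q4 * ∑ i, ∑ j, w i j * w i j := by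
    rw [Finset.mul_sum, ← Finset.sum_add_distrib, ← Finset.sum_add_distrib]
    apply Finset.sum_congr rfl
    intro i _
    rw [Finset.mul_sum, ← Finset.sum_add_distrib, ← Finset.sum_add_distrib]
    exact Finset.sum_congr rfl fun j _ => hq22 i j
  have hB : (∑ i, ∑ j, h i j * w i j) + (∑ i, ∑ j, h i j * w i j)
      = -∑ i, ∑ j, w i j * w i j := by
    have hswap : (∑ i, ∑ j, h i j * w i j) = ∑ i, ∑ j, h j i * w j i :=
      Finset.sum_comm
    nth_rewrite 2 [hswap]
    rw [← Finset.sum_add_distrib, ← Finset.sum_neg_distrib]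
    apply Finset.sum_congr rfl
    intro i _
    rw [← Finset.sum_add_distrib, ← Finset.sum_neg_distrib]
    apply Finset.sum_congr rfl
    intro j _
    rw [hji i j, hw_anti i j]
    ring
  have hsq : (∑ i, ∑ j, h i j * h i j)
      = (∑ i, ∑ j, symhess S nab f (E i) (E j) * symhess S nab f (E i) (E j))
        + q4 * ∑ i, ∑ j, w i j * w i j := by
    linear_combination -hsum_s - (2*q4) * hB + (∑ i, ∑ j, h i j * w i j) * hq44
  -- BG unfolding
  have hDA : ∀ Z : V, S.g (X + Y1) Z = S.D Z f := by
    intro Z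
    rw [S.g_addl, ← d_eq_g_full S G hE hU Z f]
  have hwA : ∀ i j : Fin d, S.g (tor S nab (E i) (E j)) (X + Y1) = w i j := by
    intro i j
    rw [S.g_symm, hDA]
  have hBG : BG S G nab E (X + Y1)
      = (∑ i, S.g (curv S nab X (E i) (E i)) X)
        + (∑ i, S.D (nabTor S nab (E i) X (E i)) f)
        + q4 * ∑ i, ∑ j, w i j * w i j := by
    simp only [BG, Ric, Rm]
    rw [hHA]
    have p2 : S.g (X + Y1) (∑ i, nabTor S nab (E i) X (E i))
        = ∑ i, S.D (nabTor S nab (E i) X (E i)) f := by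
      rw [S.g_sumr]
      exact Finset.sum_congr rfl fun i _ => hDA _
    have p3 : (1 / 4 : ℝ) • (∑ i, ∑ j, S.g (tor S nab (E i) (E j)) (X + Y1)
          * S.g (tor S nab (E i) (E j)) (X + Y1))
        = q4 * ∑ i, ∑ j, w i j * w i j := by
      rw [Algebra.smul_def, ← hq4def]
      congr 1
      apply Finset.sum_congr rfl
      intro i _
      apply Finset.sum_congr rfl
      intro j _
      rw [hwA i j]
    rw [p2, p3]
  -- assemble
  rw [h1, h2, h3, hBG]
  have big1 : (∑ i, nabla3 S nab f (E i) (E i) X) - ∑ i, nabla3 S nab f X (E i) (E i)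
      = (∑ i, S.g (curv S nab X (E i) (E i)) X)
        + (∑ i, S.D (nabTor S nab (E i) X (E i)) f)
        - 2 * ∑ i, S.g (nab (E i) Y1) (tor S nab (E i) X) := by
    rw [← Finset.sum_sub_distrib]
    rw [Finset.sum_congr rfl fun i _ => e_main i]
    rw [Finset.mul_sum, ← Finset.sum_add_distrib, ← Finset.sum_sub_distrib]
  have hLHS : (∑ i, (S.g (nab (E i) (nab (E i) X)) X - S.g (nab (nab (E i) (E i)) X) X
        + S.g (nab (E i) X) (nab (E i) X)))
      = (∑ i, nabla3 S nab f (E i) (E i) X) + ∑ i, ∑ j, h i j * h i j := by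
    rw [← Finset.sum_add_distrib]
    apply Finset.sum_congr rfl
    intro i _
    rw [← h4 i, ← h5 i]
  rw [hLHS]
  linear_combination big1 + hsq

end VFCalc

open VFCalc in
/-- **Statement 16 (subRiemannian Bochner formulas).** If the metric extension
is strictly normal for the basic grading and `VM` is integrable, then for every
smooth `f`:
`(1/2)Δ₀|∇₀f|² - ⟨∇₀f,∇₀Δ₀f⟩ = ℛ(∇f,∇f) + ‖∇₀^{2,sym}f‖² - 2Σ⟨∇_{E_i}∇₁f, Tor(E_i,∇₀f)⟩`
and `(1/2)Δ₀|∇₁f|² - ⟨∇₁f,∇₁Δ₀f⟩ = ‖∇₀∇₁f‖²`. -/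
theorem subriemannian_bochner
    {F : Type*} {V : Type*} [CommRing F] [Algebra ℝ F]
    [AddCommGroup V] [Module F V]
    (S : VFCalc F V) (G : TwoGrading S) (nab : V → V → V)
    (hcan : IsCanonical S G nab)
    (hn0 : NormalV S G) (hn1 : NormalH S G) (hint : IntegrableV S G)
    {d : ℕ} (E : Fin d → V) (hE : IsHFrame S G E)
    {m : ℕ} (U : Fin m → V) (hU : IsVFrame S G U) :
    ∀ f : F,
      ((1 / 2 : ℝ) • lap S nab E (S.g (grad0 S E f) (grad0 S E f))
          - S.g (grad0 S E f) (grad0 S E (lap S nab E f))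
        = BG S G nab E (grad0 S E f + grad1 S U f)
          + (∑ i, ∑ j, symhess S nab f (E i) (E j) * symhess S nab f (E i) (E j))
          - 2 * ∑ i, S.g (nab (E i) (grad1 S U f))
              (tor S nab (E i) (grad0 S E f))) ∧
      ((1 / 2 : ℝ) • lap S nab E (S.g (grad1 S U f) (grad1 S U f))
          - S.g (grad1 S U f) (grad1 S U (lap S nab E f))
        = ∑ i, S.g (nab (E i) (grad1 S U f)) (nab (E i) (grad1 S U f))) := by
  intro f
  exact ⟨bochner_horiz S G nab hcan hn0 hn1 hint hE hU f,
    bochner_vert S G nab hcan hn0 hn1 hint hE hU f⟩
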